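/- arXiv:0911.5253 — 6 statements merged into one kernel-verified Lean document; each statement's English description precedes it below -/
import Mathlib

section
/- Let f₀, f₁, f₂, f₃ : E → E be affine maps and let ℓ be a line in E. If there exist four pairwise distinct points X on ℓ such that the four homologous images f₀(X), f₁(X), f₂(X), f₃(X) are coplanar, then for every point X of ℓ the four points f₀(X), f₁(X), f₂(X), f₃(X) are coplanar. -/
noncomputable section

abbrev E : Type := EuclideanSpace ℝ (Fin 3)

/-- A line: a one-dimensional affine subspace. -/
def IsLine (s : AffineSubspace ℝ E) : Prop := Module.finrank ℝ s.direction = 1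

/-- A plane: a two-dimensional affine subspace. -/
def IsPlane (s : AffineSubspace ℝ E) : Prop := Module.finrank ℝ s.direction = 2

/-- A set of points lies on a circle or a line: it is concyclic (contained in the
intersection of a sphere and a plane) or collinear. -/
def ConcyclicOrCollinear (s : Set E) : Prop :=
  EuclideanGeometry.Concyclic s ∨ Collinear ℝ s

/-- `τ` is a rotation with axis `r`: an isometry different from the identity whose
linear part has determinant 1 and which fixes every point of the line `r`. -/
def IsRotation (τ : E ≃ᵃⁱ[ℝ] E) (r : AffineSubspace ℝ E) : Prop :=
  τ ≠ AffineIsometryEquiv.refl ℝ E ∧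
  LinearMap.det (τ.linearIsometryEquiv.toLinearEquiv : E →ₗ[ℝ] E) = 1 ∧
  IsLine r ∧ ∀ x ∈ r, τ x = x

/-- `(α 0, α 1, α 2, α 3)` is a rotation quadrangle with relative revolute axes
`r i` (in the moving space): each relative displacement `τ_{i,i+1} = α (i+1) ∘ (α i)⁻¹`
is a rotation whose axis is the image `α i (r i)`. -/
def IsRotationQuadrangle (α : Fin 4 → (E ≃ᵃⁱ[ℝ] E)) (r : Fin 4 → AffineSubspace ℝ E) : Prop :=
  ∀ i : Fin 4,
    IsRotation ((α i).symm.trans (α (i + 1)))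
      ((r i).map (α i).toAffineIsometry.toAffineMap)

/-!
Parametrize `ℓ` affinely as `t ↦ X t`. In a basis, the homologous images of `X t` fail to be
affinely independent exactly when the determinant of the vectors `f (i+1) (X t) - f 0 (X t)`
vanishes. These vectors depend affinely on `t`, so the determinant is a polynomial in `t` of
degree at most `3`; having four distinct roots, it vanishes identically.
-/

open Module Set

section
variable {k V P : Type*} [Ring k] [AddCommGroup V] [Module k V] [AddTorsor V P]

theorem vectorSpan_range_eq_span_range_succ_vsub {n : ℕ} (p : Fin (n + 1) → P) :
    vectorSpan k (range p) = Submodule.span k (range fun i : Fin n => p i.succ -ᵥ p 0) := by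
  have hcons : (fun i => p i -ᵥ p 0) = Fin.cons 0 fun i : Fin n => p i.succ -ᵥ p 0 := by
    ext i
    cases i using Fin.cases <;> simp
  rw [vectorSpan_range_eq_span_range_vsub_right k p 0, hcons, Fin.range_cons,
    Submodule.span_insert_zero]

end

section
variable {k V P : Type*} [Field k] [AddCommGroup V] [Module k V] [AddTorsor V P]

theorem affineIndependent_iff_linearIndependent_succ_vsub {n : ℕ} (p : Fin (n + 1) → P) :
    AffineIndependent k p ↔ LinearIndependent k fun i : Fin n => p i.succ -ᵥ p 0 := by
  rw [affineIndependent_iff_finrank_vectorSpan_eq k p (Fintype.card_fin _),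
    vectorSpan_range_eq_span_range_succ_vsub, linearIndependent_iff_card_eq_finrank_span,
    Fintype.card_fin, eq_comm]
  rfl

theorem Module.Basis.det_ne_zero_iff_linearIndependent {ι : Type*} [Fintype ι] [DecidableEq ι]
    (b : Basis ι k V) (v : ι → V) : b.det v ≠ 0 ↔ LinearIndependent k v := by
  have := b.finiteDimensional_of_finite
  rw [← isUnit_iff_ne_zero, ← b.is_basis_iff_det]
  exact ⟨And.left, fun hv =>
    ⟨hv, hv.span_eq_top_of_card_eq_finrank' (finrank_eq_card_basis b).symm⟩⟩

theorem coplanar_range_iff_not_affineIndependent [FiniteDimensional k V] (p : Fin 4 → P) :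
    Coplanar k (range p) ↔ ¬AffineIndependent k p := by
  rw [coplanar_iff_finrank_le_two]
  exact finrank_vectorSpan_le_iff_not_affineIndependent k p (Fintype.card_fin 4)

end

open Polynomial in
theorem Matrix.det_smul_add_eq_zero_of_injective {R n ι : Type*} [CommRing R] [IsDomain R]
    [Fintype n] [DecidableEq n] [Fintype ι] (A B : Matrix n n R) {τ : ι → R}
    (hτ : Function.Injective τ) (hcard : Fintype.card n < Fintype.card ι)
    (hzero : ∀ j, (τ j • A + B).det = 0) (t : R) : (t • A + B).det = 0 := by
  set p : R[X] := ((X : R[X]) • A.map C + B.map C).det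
  have heval : ∀ s, p.eval s = (s • A + B).det := by
    intro s
    rw [← coe_evalRingHom, RingHom.map_det]
    congr 1
    ext i j
    simp only [RingHom.mapMatrix_apply, coe_evalRingHom, map_apply, add_apply, smul_apply,
      smul_eq_mul, eval_add, eval_mul, eval_C, eval_X]
  have hp : p = 0 :=
    eq_zero_of_natDegree_lt_card_of_eval_eq_zero p hτ (fun j => (heval _).trans (hzero j))
      ((natDegree_det_X_add_C_le A B).trans_lt hcard)
  rw [← heval, hp, eval_zero]

theorem Module.Basis.det_affineMap_eq_zero_of_injective {R M ι ι' : Type*} [CommRing R]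
    [IsDomain R] [AddCommGroup M] [Module R M] [Fintype ι] [DecidableEq ι] [Fintype ι']
    (b : Basis ι R M)
    (g : R →ᵃ[R] ι → M) {τ : ι' → R} (hτ : Function.Injective τ)
    (hcard : Fintype.card ι < Fintype.card ι') (hzero : ∀ j, b.det (g (τ j)) = 0) (t : R) :
    b.det (g t) = 0 := by
  have hg : ∀ s, b.toMatrix (g s) = s • b.toMatrix (g.linear 1) + b.toMatrix (g 0) := by
    intro s
    have hgs : g s = s • g.linear 1 + g 0 := by
      rw [← g.linear.map_smul, smul_eq_mul, mul_one]
      exact congrFun g.decomp s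
    ext i j
    simp [hgs, Basis.toMatrix_apply]
  rw [Basis.det_apply, hg]
  refine Matrix.det_smul_add_eq_zero_of_injective _ _ hτ hcard (fun j => ?_) t
  rw [← hg, ← Basis.det_apply, hzero]

theorem not_affineIndependent_apply_of_injective {k V P V₁ P₁ ι : Type*} [Field k]
    [AddCommGroup V] [Module k V] [FiniteDimensional k V] [AddTorsor V P]
    [AddCommGroup V₁] [Module k V₁] [AddTorsor V₁ P₁] [Fintype ι] {n : ℕ}
    (hn : finrank k V = n) (f : Fin (n + 1) → P₁ →ᵃ[k] P) (L : k →ᵃ[k] P₁) {τ : ι → k}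
    (hτ : Function.Injective τ) (hcard : n < Fintype.card ι)
    (hdep : ∀ j, ¬AffineIndependent k fun i => f i (L (τ j))) (t : k) :
    ¬AffineIndependent k fun i => f i (L t) := by
  let b := finBasisOfFinrankEq k V hn
  let g : k →ᵃ[k] Fin n → V := AffineMap.pi fun i => (f i.succ).comp L -ᵥ (f 0).comp L
  have hdet : ∀ s, ¬AffineIndependent k (fun i => f i (L s)) ↔ b.det (g s) = 0 := fun s => by
    rw [affineIndependent_iff_linearIndependent_succ_vsub, ← b.det_ne_zero_iff_linearIndependent,
      not_not]
    rfl
  simp only [hdet] at hdep ⊢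
  exact b.det_affineMap_eq_zero_of_injective g hτ (by simpa using hcard) hdep t

/-- If the homologous images under four affine maps of four pairwise
distinct points of a line are coplanar, then this holds for every point of the line. -/
theorem coplanar_homologous_images_of_four
    (f : Fin 4 → (E →ᵃ[ℝ] E)) (ℓ : AffineSubspace ℝ E) (hℓ : IsLine ℓ)
    (P : Fin 4 → E) (hP : ∀ j, P j ∈ ℓ) (hPdist : Function.Injective P)
    (hcop : ∀ j, Coplanar ℝ (Set.range fun i : Fin 4 => f i (P j))) :
    ∀ X ∈ ℓ, Coplanar ℝ (Set.range fun i : Fin 4 => f i X) := by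
  have hcol : Collinear ℝ (ℓ : Set E) := by
    rw [Collinear, ← AffineSubspace.direction, ← finrank_eq_rank, hℓ, Nat.cast_one]
  obtain ⟨v, hv⟩ := (collinear_iff_of_mem (hP 0)).mp hcol
  let L : ℝ →ᵃ[ℝ] E := AffineMap.lineMap (P 0) (v +ᵥ P 0)
  have hL : ∀ X ∈ ℓ, ∃ t, X = L t := fun X hX => by
    obtain ⟨t, rfl⟩ := hv X hX
    exact ⟨t, by simp [L, AffineMap.lineMap_apply]⟩
  choose τ hτ using fun j => hL (P j) (hP j)
  have hτinj : Function.Injective τ := fun i j hij => hPdist (by rw [hτ i, hτ j, hij])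
  intro X hX
  obtain ⟨t, rfl⟩ := hL X hX
  simp only [coplanar_range_iff_not_affineIndependent, hτ] at hcop ⊢
  exact not_affineIndependent_apply_of_injective finrank_euclideanSpace_fin f L hτinj
    (by simp) hcop t
end
end

section
/- Let f₀, f₁, f₂, f₃ : E → E be affine maps and let ℓ be a line in E parametrized as X(t) = A + t·D (D ≠ 0); write xᵢ(t) = fᵢ(X(t)). Suppose (i) there exist λ, μ, ν ∈ ℝ, not all zero, such that λ(x₀(t) − x₁(t)) + μ(x₁(t) − x₂(t)) + ν(x₂(t) − x₃(t)) = 0 for every t ∈ ℝ (so in particular the four homologous images are coplanar for every t); and (ii) there exist three pairwise distinct parameters t at which the three vectors x₀(t) − x₁(t), x₁(t) − x₂(t), x₂(t) − x₃(t) span a two-dimensional linear subspace and the four points x₀(t), x₁(t), x₂(t), x₃(t) lie on a circle or line. Then for every t ∈ ℝ the four points x₀(t), x₁(t), x₂(t), x₃(t) lie on a circle or line. -/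
noncomputable section

open scoped RealInnerProductSpace

set_option maxHeartbeats 1000000 in
private lemma aux_concyclic (Q : Fin 4 → E) (d0 d1 d2 d3 : ℝ)
    (hsum : d0 + d1 + d2 + d3 = 0)
    (hP : d0 • Q 0 + d1 • Q 1 + d2 • Q 2 + d3 • Q 3 = 0)
    (hq : d0 * ⟪Q 0, Q 0⟫ + d1 * ⟪Q 1, Q 1⟫ + d2 * ⟪Q 2, Q 2⟫ + d3 * ⟪Q 3, Q 3⟫ = 0)
    (hne : ¬(d1 = 0 ∧ d2 = 0 ∧ d3 = 0))
    (hind : LinearIndependent ℝ ![Q 1 - Q 0, Q 2 - Q 0]) :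
    EuclideanGeometry.Concyclic (Set.range Q) := by
  set u : E := Q 1 - Q 0 with hu_def
  set w : E := Q 2 - Q 0 with hw_def
  set z : E := Q 3 - Q 0 with hz_def
  -- vector relation
  have hrel : d1 • u + d2 • w + d3 • z = 0 := by
    have h : d1 • u + d2 • w + d3 • z =
        (d0 • Q 0 + d1 • Q 1 + d2 • Q 2 + d3 • Q 3) - (d0 + d1 + d2 + d3) • Q 0 := by
      simp only [hu_def, hw_def, hz_def]; module
    rw [hP, hsum] at h; simpa using h
  have hd3 : d3 ≠ 0 := by
    intro h3
    rw [h3, zero_smul, add_zero] at hrel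
    obtain ⟨h1, h2⟩ := LinearIndependent.pair_iff.mp hind d1 d2 hrel
    exact hne ⟨h1, h2, h3⟩
  have hz3 : d3 • z = (-d1) • u + (-d2) • w := by
    linear_combination (norm := module) hrel
  have hzspan : z = (d3⁻¹ * -d1) • u + (d3⁻¹ * -d2) • w := by
    conv_lhs => rw [← inv_smul_smul₀ hd3 z, hz3]
    module
  set iu : ℝ := ⟪u, u⟫ with hiu
  set iw : ℝ := ⟪w, w⟫ with hiw
  set ix : ℝ := ⟪u, w⟫ with hix
  set g : ℝ := iu * iw - ix ^ 2 with hg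
  have hwne : w ≠ 0 := by
    intro h
    have := (LinearIndependent.pair_iff.mp hind 0 1 (by simp [h])).2
    norm_num at this
  have hgne : g ≠ 0 := by
    intro h0
    have hz0 : iw • u - ix • w = 0 := by
      have : ⟪iw • u - ix • w, iw • u - ix • w⟫ = iw * g := by
        simp only [inner_sub_left, inner_sub_right, real_inner_smul_left, real_inner_smul_right,
          ← hiu, ← hiw, ← hix, hg]
        rw [real_inner_comm u w, ← hix]
        ring
      rw [h0, mul_zero] at this
      exact inner_self_eq_zero.mp this
    have : iw • u + (-ix) • w = 0 := by rw [neg_smul, ← sub_eq_add_neg]; exact hz0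
    have h2 := LinearIndependent.pair_iff.mp hind iw (-ix) this
    exact hwne (inner_self_eq_zero.mp (by rw [← hiw, h2.1]))
  set b1 : ℝ := ⟪Q 1, Q 1⟫ - ⟪Q 0, Q 0⟫ with hb1
  set b2 : ℝ := ⟪Q 2, Q 2⟫ - ⟪Q 0, Q 0⟫ with hb2
  set b3 : ℝ := ⟪Q 3, Q 3⟫ - ⟪Q 0, Q 0⟫ with hb3
  have hbrel : d1 * b1 + d2 * b2 + d3 * b3 = 0 := by
    simp only [hb1, hb2, hb3]; linear_combination hq - ⟪Q 0, Q 0⟫ * hsum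
  set O : E := (2 * g)⁻¹ • ((b1 * iw - b2 * ix) • u + (b2 * iu - b1 * ix) • w) with hO
  have hOu : 2 * ⟪u, O⟫ = b1 := by
    simp only [hO, inner_smul_right, inner_add_right, ← hiu, ← hix]
    field_simp
    ring
  have hOw : 2 * ⟪w, O⟫ = b2 := by
    simp only [hO, inner_smul_right, inner_add_right]
    rw [real_inner_comm u w, ← hix, ← hiw]
    field_simp
    ring
  have hOz : 2 * ⟪z, O⟫ = b3 := by
    have h : d3 * ⟪z, O⟫ = (-d1) * ⟪u, O⟫ + (-d2) * ⟪w, O⟫ := by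
      have := congrArg (fun y : E => ⟪y, O⟫) hz3
      simpa [inner_smul_left, inner_add_left] using this
    have h2 : d3 * (2 * ⟪z, O⟫) = d3 * b3 := by
      linear_combination 2 * h - d1 * hOu - d2 * hOw - hbrel
    exact mul_left_cancel₀ hd3 h2
  have hEq : ∀ m : Fin 4, 2 * ⟪Q m - Q 0, O⟫ = ⟪Q m, Q m⟫ - ⟪Q 0, Q 0⟫ := by
    intro m
    match m with
    | 0 => simp
    | 1 => exact hOu
    | 2 => exact hOw
    | 3 => exact hOz
  have hdist : ∀ m : Fin 4, dist (Q m) O = dist (Q 0) O := by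
    intro m
    have hsq : ⟪Q m - O, Q m - O⟫ = ⟪Q 0 - O, Q 0 - O⟫ := by
      have h := hEq m
      simp only [inner_sub_left, inner_sub_right] at h ⊢
      have c1 := real_inner_comm (Q m) O
      have c2 := real_inner_comm (Q 0) O
      linarith
    rw [dist_eq_norm, dist_eq_norm]
    have h1 : ‖Q m - O‖ ^ 2 = ‖Q 0 - O‖ ^ 2 := by
      rw [← real_inner_self_eq_norm_sq, ← real_inner_self_eq_norm_sq]; exact hsq
    nlinarith [norm_nonneg (Q m - O), norm_nonneg (Q 0 - O)]
  constructor
  · exact ⟨O, dist (Q 0) O, by rintro p ⟨m, rfl⟩; exact hdist m⟩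
  · have hv : ∀ m : Fin 4, Q m - Q 0 ∈ Submodule.span ℝ ({u, w} : Set E) := by
      have hu' : u ∈ Submodule.span ℝ ({u, w} : Set E) :=
        Submodule.subset_span (by simp)
      have hw' : w ∈ Submodule.span ℝ ({u, w} : Set E) :=
        Submodule.subset_span (by simp)
      intro m
      match m with
      | 0 => simp
      | 1 => exact hu'
      | 2 => exact hw'
      | 3 =>
        rw [show Q 3 - Q 0 = z from rfl, hzspan]
        exact Submodule.add_mem _ (Submodule.smul_mem _ _ hu') (Submodule.smul_mem _ _ hw')
    have hsub : vectorSpan ℝ (Set.range Q) ≤ Submodule.span ℝ {u, w} := by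
      rw [vectorSpan, Submodule.span_le]
      rintro v ⟨p1, hp1, p2, hp2, rfl⟩
      obtain ⟨m1, rfl⟩ := hp1
      obtain ⟨m2, rfl⟩ := hp2
      show Q m1 -ᵥ Q m2 ∈ _
      have heq : Q m1 -ᵥ Q m2 = (Q m1 - Q 0) - (Q m2 - Q 0) := by
        rw [vsub_eq_sub]; abel
      rw [heq]
      exact Submodule.sub_mem _ (hv m1) (hv m2)
    calc Module.rank ℝ (vectorSpan ℝ (Set.range Q))
        ≤ Module.rank ℝ (Submodule.span ℝ ({u, w} : Set E)) := Submodule.rank_mono hsub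
      _ ≤ Cardinal.mk ({u, w} : Set E) := rank_span_le _
      _ ≤ 2 := by
          apply Cardinal.mk_insert_le.trans
          rw [Cardinal.mk_singleton]
          exact le_of_eq one_add_one_eq_two

private lemma dep_of_not_indep {a b : E} (ha : a ≠ 0) (h : ¬ LinearIndependent ℝ ![a, b]) :
    ∃ r : ℝ, b = r • a := by
  rw [LinearIndependent.pair_iff] at h
  push_neg at h
  obtain ⟨s, t, hst, hne⟩ := h
  by_cases ht : t = 0
  · exfalso
    rw [ht, zero_smul, add_zero] at hst
    rcases smul_eq_zero.mp hst with hs | h0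
    · exact hne hs ht
    · exact ha h0
  · refine ⟨-(s / t), ?_⟩
    have h2 : t • b = (-s) • a := by
      linear_combination (norm := module) hst
    rw [← inv_smul_smul₀ ht b, h2, smul_smul]
    congr 1
    field_simp

private lemma key_lemma (Q : Fin 4 → E) (d0 d1 d2 d3 : ℝ)
    (hsum : d0 + d1 + d2 + d3 = 0)
    (hP : d0 • Q 0 + d1 • Q 1 + d2 • Q 2 + d3 • Q 3 = 0)
    (hq : d0 * ⟪Q 0, Q 0⟫ + d1 * ⟪Q 1, Q 1⟫ + d2 * ⟪Q 2, Q 2⟫ + d3 * ⟪Q 3, Q 3⟫ = 0)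
    (hne : ¬(d1 = 0 ∧ d2 = 0 ∧ d3 = 0)) :
    ConcyclicOrCollinear (Set.range Q) := by
  set v1 : E := Q 1 - Q 0 with hv1
  set v2 : E := Q 2 - Q 0 with hv2
  set v3 : E := Q 3 - Q 0 with hv3
  by_cases h12 : LinearIndependent ℝ ![v1, v2]
  · exact Or.inl (aux_concyclic Q d0 d1 d2 d3 hsum hP hq hne h12)
  by_cases h13 : LinearIndependent ℝ ![v1, v3]
  · left
    set π : Equiv.Perm (Fin 4) := Equiv.swap 2 3 with hπ
    have hπ0 : π 0 = 0 := by decide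
    have hπ1 : π 1 = 1 := by decide
    have hπ2 : π 2 = 3 := by decide
    have hπ3 : π 3 = 2 := by decide
    have hQ : Set.range (Q ∘ π) = Set.range Q := π.surjective.range_comp Q
    rw [← hQ]
    apply aux_concyclic (Q ∘ π) d0 d1 d3 d2
    · linarith
    · simp only [Function.comp_apply, hπ0, hπ1, hπ2, hπ3]
      linear_combination (norm := module) hP
    · simp only [Function.comp_apply, hπ0, hπ1, hπ2, hπ3]
      linear_combination hq
    · tauto
    · simpa only [Function.comp_apply, hπ0, hπ1, hπ2] using h13
  by_cases h23 : LinearIndependent ℝ ![v2, v3]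
  · left
    set π : Equiv.Perm (Fin 4) := (Equiv.swap 2 3).trans (Equiv.swap 1 2) with hπ
    have hπ0 : π 0 = 0 := by decide
    have hπ1 : π 1 = 2 := by decide
    have hπ2 : π 2 = 3 := by decide
    have hπ3 : π 3 = 1 := by decide
    have hQ : Set.range (Q ∘ π) = Set.range Q := π.surjective.range_comp Q
    rw [← hQ]
    apply aux_concyclic (Q ∘ π) d0 d2 d3 d1
    · linarith
    · simp only [Function.comp_apply, hπ0, hπ1, hπ2, hπ3]
      linear_combination (norm := module) hP
    · simp only [Function.comp_apply, hπ0, hπ1, hπ2, hπ3]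
      linear_combination hq
    · tauto
    · simpa only [Function.comp_apply, hπ0, hπ1, hπ2] using h23
  · -- collinear case
    right
    have hmul : ∃ v : E, (∃ r1 : ℝ, v1 = r1 • v) ∧ (∃ r2 : ℝ, v2 = r2 • v) ∧
        (∃ r3 : ℝ, v3 = r3 • v) := by
      by_cases h1 : v1 = 0
      · by_cases h2 : v2 = 0
        · exact ⟨v3, ⟨0, by simp [h1]⟩, ⟨0, by simp [h2]⟩, ⟨1, by simp⟩⟩
        · obtain ⟨r, hr⟩ := dep_of_not_indep h2 h23
          exact ⟨v2, ⟨0, by simp [h1]⟩, ⟨1, by simp⟩, ⟨r, hr⟩⟩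
      · obtain ⟨r2, hr2⟩ := dep_of_not_indep h1 h12
        obtain ⟨r3, hr3⟩ := dep_of_not_indep h1 h13
        exact ⟨v1, ⟨1, by simp⟩, ⟨r2, hr2⟩, ⟨r3, hr3⟩⟩
    obtain ⟨v, ⟨r1, hr1⟩, ⟨r2, hr2⟩, ⟨r3, hr3⟩⟩ := hmul
    rw [collinear_iff_of_mem (Set.mem_range_self 0)]
    refine ⟨v, ?_⟩
    rintro p ⟨m, rfl⟩
    have key : ∀ m : Fin 4, ∃ r : ℝ, Q m = r • v +ᵥ Q 0 := by
      intro m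
      match m with
      | 0 => exact ⟨0, by simp⟩
      | 1 => exact ⟨r1, by rw [vadd_eq_add, ← hr1, hv1]; abel⟩
      | 2 => exact ⟨r2, by rw [vadd_eq_add, ← hr2, hv2]; abel⟩
      | 3 => exact ⟨r3, by rw [vadd_eq_add, ← hr3, hv3]; abel⟩
    exact key m

/-- On a parametrized line `t ↦ A + t • D`, if the differences of
consecutive homologous images satisfy a fixed nontrivial linear relation for all `t`
(so the four homologous images are always coplanar), and for three pairwise distinct
parameters the difference vectors span a plane and the homologous images lie on a
circle or line, then the homologous images lie on a circle or line for every `t`. -/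
theorem concyclic_homologous_images_of_three
    (f : Fin 4 → (E →ᵃ[ℝ] E)) (A D : E) (hD : D ≠ 0)
    (x : Fin 4 → ℝ → E) (hx : ∀ i t, x i t = f i (A + t • D))
    (lam mu nu : ℝ) (hnotall : ¬ (lam = 0 ∧ mu = 0 ∧ nu = 0))
    (hrel : ∀ t : ℝ,
      lam • (x 0 t - x 1 t) + mu • (x 1 t - x 2 t) + nu • (x 2 t - x 3 t) = 0)
    (ts : Fin 3 → ℝ) (hts : Function.Injective ts)
    (hspan : ∀ j, Module.finrank ℝ
      (Submodule.span ℝ {x 0 (ts j) - x 1 (ts j), x 1 (ts j) - x 2 (ts j),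
        x 2 (ts j) - x 3 (ts j)}) = 2)
    (hcirc : ∀ j, ConcyclicOrCollinear (Set.range fun i : Fin 4 => x i (ts j))) :
    ∀ t : ℝ, ConcyclicOrCollinear (Set.range fun i : Fin 4 => x i t) := by
  -- affine structure of x i
  set P : Fin 4 → E := fun i => f i A with hP_def
  set V : Fin 4 → E := fun i => (f i).linear D with hV_def
  have hxi : ∀ i t, x i t = P i + t • V i := by
    intro i t
    rw [hx i t, hP_def, hV_def]
    have : A + t • D = t • D +ᵥ A := add_comm _ _
    rw [this, AffineMap.map_vadd, LinearMap.map_smul, vadd_eq_add]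
    exact add_comm _ _
  -- coefficients
  set c0 : ℝ := lam with hc0
  set c1 : ℝ := mu - lam with hc1
  set c2 : ℝ := nu - mu with hc2
  set c3 : ℝ := -nu with hc3
  have hsum : c0 + c1 + c2 + c3 = 0 := by rw [hc0, hc1, hc2, hc3]; ring
  have hcne : ¬(c1 = 0 ∧ c2 = 0 ∧ c3 = 0) := by
    rintro ⟨h1, h2, h3⟩
    rw [hc1] at h1; rw [hc2] at h2; rw [hc3] at h3
    exact hnotall ⟨by linarith, by linarith, by linarith⟩
  have hPt : ∀ t : ℝ, c0 • x 0 t + c1 • x 1 t + c2 • x 2 t + c3 • x 3 t = 0 := by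
    intro t
    rw [hc0, hc1, hc2, hc3]
    linear_combination (norm := module) hrel t
  -- quadratic expansion of inner products
  have hexp : ∀ (i : Fin 4) (t : ℝ),
      ⟪x i t, x i t⟫ = ⟪P i, P i⟫ + 2 * t * ⟪P i, V i⟫ + t ^ 2 * ⟪V i, V i⟫ := by
    intro i t
    rw [hxi i t]
    simp only [inner_add_add_self, real_inner_smul_left, real_inner_smul_right]
    rw [real_inner_comm (P i) (V i)]
    ring
  set a : ℝ := c0 * ⟪P 0, P 0⟫ + c1 * ⟪P 1, P 1⟫ + c2 * ⟪P 2, P 2⟫ + c3 * ⟪P 3, P 3⟫ with ha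
  set b : ℝ := 2 * (c0 * ⟪P 0, V 0⟫ + c1 * ⟪P 1, V 1⟫ + c2 * ⟪P 2, V 2⟫ + c3 * ⟪P 3, V 3⟫) with hb
  set e : ℝ := c0 * ⟪V 0, V 0⟫ + c1 * ⟪V 1, V 1⟫ + c2 * ⟪V 2, V 2⟫ + c3 * ⟪V 3, V 3⟫ with he
  have hphi : ∀ t : ℝ,
      c0 * ⟪x 0 t, x 0 t⟫ + c1 * ⟪x 1 t, x 1 t⟫ + c2 * ⟪x 2 t, x 2 t⟫ + c3 * ⟪x 3 t, x 3 t⟫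
        = a + b * t + e * t ^ 2 := by
    intro t
    rw [hexp 0 t, hexp 1 t, hexp 2 t, hexp 3 t, ha, hb, he]
    ring
  -- vanishing at the three sample parameters
  have hvanish : ∀ j : Fin 3, a + b * ts j + e * (ts j) ^ 2 = 0 := by
    intro j
    rw [← hphi (ts j)]
    rcases hcirc j with hc | hc
    · -- concyclic: use the sphere
      obtain ⟨⟨O, r, hsph⟩, -⟩ := hc
      have hi : ∀ i : Fin 4, ⟪x i (ts j), x i (ts j)⟫
          = r ^ 2 + 2 * ⟪x i (ts j), O⟫ - ⟪O, O⟫ := by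
        intro i
        have hd : dist (x i (ts j)) O = r := hsph _ ⟨i, rfl⟩
        have h2 : ⟪x i (ts j) - O, x i (ts j) - O⟫ = r ^ 2 := by
          rw [real_inner_self_eq_norm_sq, ← dist_eq_norm, hd]
        simp only [inner_sub_left, inner_sub_right] at h2
        have hcm := real_inner_comm (x i (ts j)) O
        linarith
      have hPin : c0 * ⟪x 0 (ts j), O⟫ + c1 * ⟪x 1 (ts j), O⟫
          + c2 * ⟪x 2 (ts j), O⟫ + c3 * ⟪x 3 (ts j), O⟫ = 0 := by
        have h := congrArg (fun y : E => ⟪y, O⟫) (hPt (ts j))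
        simp only [inner_add_left, real_inner_smul_left, inner_zero_left] at h
        exact h
      rw [hi 0, hi 1, hi 2, hi 3]
      linear_combination (r ^ 2 - ⟪O, O⟫) * hsum + 2 * hPin
    · -- collinear: contradicts hspan
      exfalso
      have hrank : Module.rank ℝ (vectorSpan ℝ (Set.range fun i : Fin 4 => x i (ts j))) ≤ 1 := hc
      have hle : Submodule.span ℝ {x 0 (ts j) - x 1 (ts j), x 1 (ts j) - x 2 (ts j),
          x 2 (ts j) - x 3 (ts j)} ≤ vectorSpan ℝ (Set.range fun i : Fin 4 => x i (ts j)) := by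
        rw [Submodule.span_le]
        rintro v (rfl | rfl | rfl)
        · exact vsub_mem_vectorSpan ℝ ⟨0, rfl⟩ ⟨1, rfl⟩
        · exact vsub_mem_vectorSpan ℝ ⟨1, rfl⟩ ⟨2, rfl⟩
        · exact vsub_mem_vectorSpan ℝ ⟨2, rfl⟩ ⟨3, rfl⟩
      have h1 : Module.rank ℝ (Submodule.span ℝ {x 0 (ts j) - x 1 (ts j),
          x 1 (ts j) - x 2 (ts j), x 2 (ts j) - x 3 (ts j)}) ≤ 1 :=
        le_trans (Submodule.rank_mono hle) hrank
      have h2 : Module.finrank ℝ (Submodule.span ℝ {x 0 (ts j) - x 1 (ts j),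
          x 1 (ts j) - x 2 (ts j), x 2 (ts j) - x 3 (ts j)}) ≤ 1 :=
        Module.finrank_le_of_rank_le (by exact_mod_cast h1)
      rw [hspan j] at h2
      norm_num at h2
  -- the quadratic vanishes identically
  have ht01 : ts 0 ≠ ts 1 := fun h => absurd (hts h) (by decide)
  have ht02 : ts 0 ≠ ts 2 := fun h => absurd (hts h) (by decide)
  have ht12 : ts 1 ≠ ts 2 := fun h => absurd (hts h) (by decide)
  have h0 := hvanish 0
  have h1 := hvanish 1
  have h2 := hvanish 2
  have hE : e = 0 := by
    have hmul : e * ((ts 0 - ts 1) * (ts 1 - ts 2) * (ts 0 - ts 2)) = 0 := by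
      linear_combination (ts 1 - ts 2) * h0 - (ts 0 - ts 2) * h1 + (ts 0 - ts 1) * h2
    have hne' : (ts 0 - ts 1) * (ts 1 - ts 2) * (ts 0 - ts 2) ≠ 0 := by
      apply mul_ne_zero (mul_ne_zero (sub_ne_zero.mpr ht01) (sub_ne_zero.mpr ht12))
        (sub_ne_zero.mpr ht02)
    exact (mul_eq_zero.mp hmul).resolve_right hne'
  have hB : b = 0 := by
    have hmul : b * (ts 0 - ts 1) = 0 := by
      linear_combination h0 - h1 - (ts 0 ^ 2 - ts 1 ^ 2) * hE
    exact (mul_eq_zero.mp hmul).resolve_right (sub_ne_zero.mpr ht01)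
  have hA : a = 0 := by linear_combination h0 - ts 0 * hB - ts 0 ^ 2 * hE
  -- conclude for every t
  intro t
  apply key_lemma (fun i : Fin 4 => x i t) c0 c1 c2 c3 hsum (hPt t) _ hcne
  rw [hphi t, hA, hB, hE]
  ring
end
end

section
/- Let (α₀, α₁, α₂, α₃) be a rotation quadrangle with relative revolute axes r_{i,i+1}, and let u be a line meeting each axis r_{i,i+1} in a point P_{i,i+1}, the four points P₀₁, P₁₂, P₂₃, P₃₀ being pairwise distinct. Assume there exists a point X on u such that P₀₁ lies strictly between X and P₁₂, P₀₁ lies strictly between X and P₃₀, P₂₃ lies strictly between X and P₁₂, and P₂₃ lies strictly between X and P₃₀. Set U_{i,i+1} = α_i(P_{i,i+1}) (the vertices of the skew quadrilateral formed by the homologous images of u). Then dist(U₃₀, U₀₁) + dist(U₁₂, U₂₃) = dist(U₀₁, U₁₂) + dist(U₂₃, U₃₀); that is, both pairs of opposite edges in the skew quadrilateral (U₀₁, U₁₂, U₂₃, U₃₀) have the same sum of lengths (the classical criterion for the existence of a hyperboloid of revolution through the four lines α₀(u), α₁(u), α₂(u), α₃(u)). -/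
/-!
Since `P i` lies on the axis of `τ_{i,i+1}`, the positions `α i` and `α (i + 1)` agree at
`P i`, so the edge `U i U (i + 1)` is the image of the segment `P i P (i + 1)` under the
isometry `α (i + 1)`. The edge lengths are thus distances on `u`, and the separation by `X`
makes each of them a difference of distances from `X`: both sums of opposite edges equal
`XP₁ + XP₃ - XP₀ - XP₂`.
-/

noncomputable section

theorem dist_add_dist_eq_dist_add_dist_of_wbtw {V P : Type*} [NormedAddCommGroup V]
    [NormedSpace ℝ V] [MetricSpace P] [NormedAddTorsor V P] {x a b c d : P}
    (hab : Wbtw ℝ x a b) (had : Wbtw ℝ x a d) (hcb : Wbtw ℝ x c b) (hcd : Wbtw ℝ x c d) :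
    dist d a + dist b c = dist a b + dist c d := by
  have := hab.dist_add_dist
  have := had.dist_add_dist
  have := hcb.dist_add_dist
  have := hcd.dist_add_dist
  rw [dist_comm d a, dist_comm b c]
  linarith

theorem IsRotation.apply_eq_self {τ : E ≃ᵃⁱ[ℝ] E} {r : AffineSubspace ℝ E}
    (h : IsRotation τ r) {x : E} (hx : x ∈ r) : τ x = x :=
  h.2.2.2 x hx

namespace IsRotationQuadrangle

variable {α : Fin 4 → (E ≃ᵃⁱ[ℝ] E)} {r : Fin 4 → AffineSubspace ℝ E}

theorem apply_succ_eq_apply (hquad : IsRotationQuadrangle α r) {i : Fin 4} {p : E}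
    (hp : p ∈ r i) : α (i + 1) p = α i p := by
  simpa using (hquad i).apply_eq_self ⟨p, hp, rfl⟩

theorem dist_apply_apply_succ (hquad : IsRotationQuadrangle α r) {i : Fin 4} {p : E}
    (hp : p ∈ r i) (q : E) : dist (α i p) (α (i + 1) q) = dist p q := by
  rw [← hquad.apply_succ_eq_apply hp, AffineIsometryEquiv.dist_map]

end IsRotationQuadrangle

theorem opposite_edges_equal_sum_general
    (α : Fin 4 → (E ≃ᵃⁱ[ℝ] E)) (r : Fin 4 → AffineSubspace ℝ E)
    (hquad : IsRotationQuadrangle α r)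
    (P : Fin 4 → E) (hPr : ∀ i, P i ∈ r i)
    (X : E)
    (h01 : Sbtw ℝ X (P 0) (P 1)) (h03 : Sbtw ℝ X (P 0) (P 3))
    (h21 : Sbtw ℝ X (P 2) (P 1)) (h23 : Sbtw ℝ X (P 2) (P 3))
    (U : Fin 4 → E) (hU : ∀ i, U i = α i (P i)) :
    dist (U 3) (U 0) + dist (U 1) (U 2) = dist (U 0) (U 1) + dist (U 2) (U 3) := by
  have hedge (i : Fin 4) : dist (U i) (U (i + 1)) = dist (P i) (P (i + 1)) := by
    rw [hU, hU, hquad.dist_apply_apply_succ (hPr i)]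
  have e30 : dist (U 3) (U 0) = dist (P 3) (P 0) := hedge 3
  have e01 : dist (U 0) (U 1) = dist (P 0) (P 1) := hedge 0
  have e12 : dist (U 1) (U 2) = dist (P 1) (P 2) := hedge 1
  have e23 : dist (U 2) (U 3) = dist (P 2) (P 3) := hedge 2
  rw [e30, e01, e12, e23]
  exact dist_add_dist_eq_dist_add_dist_of_wbtw h01.wbtw h03.wbtw h21.wbtw h23.wbtw

/-- In a rotation quadrangle, let `u` meet each axis `r i` in a point
`P i`, the four points being pairwise distinct, and suppose some `X ∈ u` is separated
from `P 1` and `P 3` by `P 0` as well as by `P 2`.  With `U i = α i (P i)` the vertices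
of the skew quadrilateral formed by the homologous images of `u`, both pairs of
opposite edges have the same sum of lengths:
`dist (U 3) (U 0) + dist (U 1) (U 2) = dist (U 0) (U 1) + dist (U 2) (U 3)`. -/
theorem opposite_edges_equal_sum
    (α : Fin 4 → (E ≃ᵃⁱ[ℝ] E)) (r : Fin 4 → AffineSubspace ℝ E)
    (hquad : IsRotationQuadrangle α r)
    (u : AffineSubspace ℝ E) (hu : IsLine u)
    (P : Fin 4 → E) (hPu : ∀ i, P i ∈ u) (hPr : ∀ i, P i ∈ r i)
    (hPdist : Function.Injective P)
    (X : E) (hXu : X ∈ u)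
    (h01 : Sbtw ℝ X (P 0) (P 1)) (h03 : Sbtw ℝ X (P 0) (P 3))
    (h21 : Sbtw ℝ X (P 2) (P 1)) (h23 : Sbtw ℝ X (P 2) (P 3))
    (U : Fin 4 → E) (hU : ∀ i, U i = α i (P i)) :
    dist (U 3) (U 0) + dist (U 1) (U 2) = dist (U 0) (U 1) + dist (U 2) (U 3) :=
  opposite_edges_equal_sum_general α r hquad P hPr X h01 h03 h21 h23 U hU
end
end

section
/- Let τ be an isometry of E, different from the identity, whose linear part is orientation-preserving (has determinant 1), and which fixes every point of a line r (i.e., τ is a rotation with axis r). Let ℓ be a line such that ℓ and its image τ(ℓ) have a common point. Then either ℓ intersects the axis r, or the direction of ℓ is orthogonal to the direction of r. -/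
noncomputable section

open scoped RealInnerProductSpace

/-!
Suppose `ℓ` is not orthogonal to the axis, say `⟪v, w⟫ ≠ 0` with `v` along `ℓ` and `w` along
`r`. A rotation moves every point orthogonally to its axis, so if `p` and `τ p` both lie on `ℓ`,
then `τ p -ᵥ p` lies along `ℓ` and is orthogonal to `w`, hence vanishes. A fixed point `p` off the
axis would make the linear part of `τ` fix a plane pointwise; it would then be the identity or the
reflection in that plane, and the determinant excludes the reflection, so `τ` would be the identity.
-/

open Module Submodule

theorem Submodule.eq_zero_of_inner_eq_zero_of_finrank_eq_one
    {𝕜 F : Type*} [RCLike 𝕜] [NormedAddCommGroup F] [InnerProductSpace 𝕜 F]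
    {W : Submodule 𝕜 F} (hW : finrank 𝕜 W = 1) {u v w : F} (hu : u ∈ W) (hv : v ∈ W)
    (hvw : inner 𝕜 v w ≠ 0) (huw : inner 𝕜 u w = 0) : u = 0 := by
  have hv0 : v ≠ 0 := by rintro rfl; simp at hvw
  obtain ⟨c, rfl⟩ := mem_span_singleton.mp <|
    (eq_span_singleton_of_mem_of_finrank_eq_one hW hv hv0) ▸ hu
  rw [inner_smul_left, mul_eq_zero, map_eq_zero] at huw
  simp [huw.resolve_right hvw]

theorem LinearIsometryEquiv.eq_refl_of_det_eq_one_of_finrank_orthogonal_le_one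
    {F : Type*} [NormedAddCommGroup F] [InnerProductSpace ℝ F] [FiniteDimensional ℝ F]
    (φ : F ≃ₗᵢ[ℝ] F) (hdet : LinearMap.det (φ.toLinearEquiv : F →ₗ[ℝ] F) = 1)
    {K : Submodule ℝ F} (hK : finrank ℝ Kᗮ ≤ 1) (hfix : ∀ x ∈ K, φ x = x) :
    φ = LinearIsometryEquiv.refl ℝ F := by
  have hker : finrank ℝ (ContinuousLinearMap.id ℝ F - φ).kerᗮ ≤ 1 :=
    (finrank_mono <| orthogonal_le fun x hx => by simp [hfix x hx]).trans hK
  -- Cartan–Dieudonné: `φ` is a product of at most one reflection in a hyperplane `(ℝ ∙ v)ᗮ`.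
  obtain ⟨_ | ⟨v, _ | _⟩, hlen, rfl⟩ := φ.reflections_generate_dim_aux hker
  · rfl
  · simp only [List.map_cons, List.map_nil, List.prod_cons, List.prod_nil, mul_one] at hdet ⊢
    rw [det_reflection, orthogonal_orthogonal] at hdet
    have hv : v = 0 := by
      by_contra hv
      rw [finrank_span_singleton hv] at hdet
      norm_num at hdet
    subst hv
    ext x
    exact reflection_mem_subspace_eq_self (by simp)
  · simp at hlen

section AffineIsometry

variable {V P : Type*} [NormedAddCommGroup V] [InnerProductSpace ℝ V] [MetricSpace P]
  [NormedAddTorsor V P]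

theorem AffineIsometryEquiv.linearIsometryEquiv_apply_eq_self_of_mem_direction
    (τ : P ≃ᵃⁱ[ℝ] P) {s : AffineSubspace ℝ P} (hfix : ∀ x ∈ s, τ x = x) {p₀ : P}
    (hp₀ : p₀ ∈ s) {v : V} (hv : v ∈ s.direction) : τ.linearIsometryEquiv v = v := by
  have := hfix _ (AffineSubspace.vadd_mem_of_mem_direction hv hp₀)
  rwa [τ.map_vadd, hfix p₀ hp₀, vadd_right_cancel_iff] at this

theorem AffineIsometryEquiv.inner_apply_vsub_self_eq_zero (τ : P ≃ᵃⁱ[ℝ] P) {p₀ : P}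
    (hp₀ : τ p₀ = p₀) {w : V} (hw : τ.linearIsometryEquiv w = w) (p : P) :
    ⟪τ p -ᵥ p, w⟫ = 0 := by
  rw [← vsub_sub_vsub_cancel_right (τ p) p p₀, ← hp₀, ← τ.map_vsub, hp₀, inner_sub_left]
  nth_rw 1 [← hw]
  rw [τ.linearIsometryEquiv.inner_map_map, sub_self]

theorem AffineIsometryEquiv.eq_refl_of_det_eq_one_of_fixes [FiniteDimensional ℝ V]
    (τ : P ≃ᵃⁱ[ℝ] P)
    (hdet : LinearMap.det (τ.linearIsometryEquiv.toLinearEquiv : V →ₗ[ℝ] V) = 1)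
    {s : AffineSubspace ℝ P} (hs : finrank ℝ V ≤ finrank ℝ s.direction + 2)
    (hfix : ∀ x ∈ s, τ x = x) {p₀ p : P} (hp₀ : p₀ ∈ s) (hp : p ∉ s) (hτp : τ p = p) :
    τ = AffineIsometryEquiv.refl ℝ P := by
  set K := s.direction ⊔ ℝ ∙ (p -ᵥ p₀)
  have hKfix : K ≤ LinearMap.eqLocus τ.linearIsometryEquiv.toLinearMap LinearMap.id := by
    refine sup_le (fun v hv => ?_) (span_singleton_le_iff_mem _ _ |>.mpr ?_)
    · exact τ.linearIsometryEquiv_apply_eq_self_of_mem_direction hfix hp₀ hv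
    · simp [LinearMap.mem_eqLocus, τ.map_vsub, hτp, hfix p₀ hp₀]
  have hlt : s.direction < K := by
    refine lt_of_le_of_ne le_sup_left fun h => hp ?_
    rw [← AffineSubspace.vsub_right_mem_direction_iff_mem hp₀, h]
    exact mem_sup_right (mem_span_singleton_self _)
  have hK : finrank ℝ Kᗮ ≤ 1 := by
    have := finrank_lt_finrank_of_lt hlt
    have := K.finrank_add_finrank_orthogonal
    omega
  have hL := τ.linearIsometryEquiv.eq_refl_of_det_eq_one_of_finrank_orthogonal_le_one hdet hK
    fun v hv => hKfix hv
  ext x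
  rw [← vsub_vadd x p₀, τ.map_vadd, hL, hfix p₀ hp₀]
  rfl

end AffineIsometry

/-- If a line `ℓ` and its image under a rotation with axis `r` have a
common point, then either `ℓ` intersects the axis `r`, or the direction of `ℓ` is
orthogonal to the direction of `r`. -/
theorem line_meeting_its_rotated_image
    (τ : E ≃ᵃⁱ[ℝ] E) (r : AffineSubspace ℝ E) (hrot : IsRotation τ r)
    (ℓ : AffineSubspace ℝ E) (hℓ : IsLine ℓ)
    (hmeet : ∃ X : E, X ∈ ℓ ∧ X ∈ ℓ.map τ.toAffineIsometry.toAffineMap) :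
    (∃ X : E, X ∈ ℓ ∧ X ∈ r) ∨
      (∀ v ∈ ℓ.direction, ∀ w ∈ r.direction, ⟪v, w⟫ = 0) := by
  obtain ⟨hne, hdet, hr, hfix⟩ := hrot
  refine or_iff_not_imp_right.mpr fun horth => ?_
  push Not at horth
  obtain ⟨v, hv, w, hw, hvw⟩ := horth
  obtain ⟨p₀, hp₀⟩ : (r : Set E).Nonempty := by
    refine (AffineSubspace.nonempty_iff_ne_bot r).mpr ?_
    rintro rfl
    rw [AffineSubspace.direction_bot, mem_bot] at hw
    simp [hw] at hvw
  obtain ⟨_, hX, p, hp, rfl⟩ := hmeet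
  have hτp : τ p = p := by
    have hw' := τ.linearIsometryEquiv_apply_eq_self_of_mem_direction hfix hp₀ hw
    rw [← vsub_eq_zero_iff_eq]
    exact eq_zero_of_inner_eq_zero_of_finrank_eq_one hℓ
      (AffineSubspace.vsub_mem_direction hX hp) hv hvw
      (τ.inner_apply_vsub_self_eq_zero (hfix p₀ hp₀) hw' p)
  have hdim : finrank ℝ E ≤ finrank ℝ r.direction + 2 := by
    rw [finrank_euclideanSpace_fin, show finrank ℝ r.direction = 1 from hr]
  exact ⟨p, hp, by_contra fun hpr =>
    hne (τ.eq_refl_of_det_eq_one_of_fixes hdet hdim hfix hp₀ hpr hτp)⟩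
end
end

section
/- Let X₀, X₁, X₂, X₃ be pairwise distinct points of E. Then the four points lie on a circle or line if and only if the 3×4 matrix whose i-th row (i = 0, 1, 2) is (‖X_i‖² − ‖X_{i+1}‖², (X_i − X_{i+1})ᵀ) has rank at most 2 (the rows being the coordinate vectors of the bisector planes of consecutive pairs of points; rank at most 2 expresses that the three bisector planes belong to a pencil, i.e., share a common line, possibly at infinity). -/
/-!
Lift every point `p` to `(p, ‖p‖²)` on the paraboloid in `E × ℝ`. The rows of the matrix are
the differences of consecutive lifted points, so its rank is the dimension of the direction `W`
of the affine span of the lifted points, and `W` projects onto the direction of the affine span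
of the points themselves. If the vertical vector `(0, 1)` lies in `W`, the projection drops one
dimension, and rank `≤ 2` means the points are collinear. Otherwise `W` is contained in the graph
of a linear form `2⟪c, ·⟫`, i.e. `‖p‖² - ‖q‖² = 2⟪c, p - q⟫` for all the points, which says
exactly that they lie on a sphere centred at `c`; the projection is then injective on `W`, and
rank `≤ 2` means the points are coplanar.
-/

noncomputable section

open Module Submodule EuclideanGeometry RealInnerProductSpace

namespace Submodule

variable {K V : Type*} [Field K] [AddCommGroup V] [Module K V]

theorem finrank_map_add_finrank_inf_ker {N : Type*} [AddCommGroup N] [Module K N]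
    (f : V →ₗ[K] N) (W : Submodule K V) [FiniteDimensional K W] :
    finrank K (W.map f) + finrank K (W ⊓ LinearMap.ker f : Submodule K V) = finrank K W := by
  have h := (f.domRestrict W).finrank_range_add_finrank_ker
  rwa [LinearMap.range_domRestrict, LinearMap.ker_domRestrict,
    ← finrank_map_subtype_eq, map_comap_subtype] at h

theorem exists_le_graph_of_notMem {W : Submodule K (V × K)} (h : ((0 : V), (1 : K)) ∉ W) :
    ∃ f : V →ₗ[K] K, W ≤ f.graph := by
  obtain ⟨φ, hφ, hW⟩ := W.exists_dual_map_eq_bot_of_notMem h inferInstance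
  refine ⟨-(φ (0, 1))⁻¹ • φ ∘ₗ LinearMap.inl K V K, fun x hx => ?_⟩
  have hx0 : φ (x.1, 0) + x.2 * φ (0, 1) = 0 := by
    have hφx : φ x = 0 := by simpa [hW] using mem_map_of_mem (f := φ) hx
    have hx_eq : x = (x.1, 0) + x.2 • (0, 1) := by ext <;> simp
    rwa [hx_eq, map_add, map_smul, smul_eq_mul] at hφx
  rw [LinearMap.mem_graph_iff, LinearMap.smul_apply, LinearMap.comp_apply, LinearMap.inl_apply,
    smul_eq_mul]
  field_simp
  linear_combination hx0

variable [FiniteDimensional K V] (W : Submodule K (V × K))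

theorem finrank_le_finrank_map_fst_add_one :
    finrank K W ≤ finrank K (W.map (LinearMap.fst K V K)) + 1 := by
  have hker : finrank K (LinearMap.ker (LinearMap.fst K V K)) = 1 := by
    rw [LinearMap.ker_fst, LinearMap.finrank_range_of_inj LinearMap.inr_injective, finrank_self]
  rw [← finrank_map_add_finrank_inf_ker (LinearMap.fst K V K) W, ← hker]
  gcongr
  exact finrank_mono inf_le_right

theorem finrank_map_fst_add_one_le_of_mem (h : ((0 : V), (1 : K)) ∈ W) :
    finrank K (W.map (LinearMap.fst K V K)) + 1 ≤ finrank K W := by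
  rw [← finrank_map_add_finrank_inf_ker (LinearMap.fst K V K) W]
  gcongr
  rw [one_le_finrank_iff, Submodule.ne_bot_iff]
  exact ⟨(0, 1), ⟨h, rfl⟩, by simp⟩

theorem finrank_map_fst_eq_of_notMem (h : ((0 : V), (1 : K)) ∉ W) :
    finrank K (W.map (LinearMap.fst K V K)) = finrank K W := by
  suffices W ⊓ LinearMap.ker (LinearMap.fst K V K) = ⊥ by
    rw [← finrank_map_add_finrank_inf_ker (LinearMap.fst K V K) W, this, finrank_bot, add_zero]
  refine (Submodule.eq_bot_iff _).2 fun ⟨v, a⟩ ⟨hW, (hv : v = 0)⟩ => ?_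
  subst hv
  by_contra hva
  have ha : a ≠ 0 := fun h => hva (by simp [h])
  exact h (by simpa [ha] using W.smul_mem a⁻¹ hW)

end Submodule

section AffineSpace

variable {k W P : Type*} [Ring k] [AddCommGroup W] [Module k W] [AddTorsor W P]

theorem vectorSpan_le_iff {s : Set P} {U : Submodule k W} :
    vectorSpan k s ≤ U ↔ ∀ p ∈ s, ∀ q ∈ s, p -ᵥ q ∈ U := by
  rw [vectorSpan_def, span_le, Set.vsub_subset_iff]
  rfl

theorem vectorSpan_range_eq_span_range_vsub_succ {n : ℕ} (p : Fin (n + 1) → P) :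
    vectorSpan k (Set.range p) = span k (Set.range fun i : Fin n => p i.castSucc -ᵥ p i.succ) := by
  apply le_antisymm
  · rw [vectorSpan_range_eq_span_range_vsub_right k p 0, span_le]
    rintro _ ⟨j, rfl⟩
    induction j using Fin.induction with
    | zero => simp
    | succ i ih =>
      dsimp only at ih ⊢
      rw [← vsub_sub_vsub_cancel_left (p i.succ) (p 0) (p i.castSucc)]
      exact sub_mem ih (subset_span ⟨i, rfl⟩)
  · rw [span_le]
    rintro _ ⟨i, rfl⟩
    exact vsub_mem_vectorSpan k (Set.mem_range_self _) (Set.mem_range_self _)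

end AffineSpace

section ParaboloidLift

variable {V : Type*} [NormedAddCommGroup V] [InnerProductSpace ℝ V]

def paraboloidLift (p : V) : V × ℝ := (p, ‖p‖ ^ 2)

theorem map_fst_vectorSpan_paraboloidLift (s : Set V) :
    (vectorSpan ℝ (paraboloidLift '' s)).map (LinearMap.fst ℝ V ℝ) = vectorSpan ℝ s := by
  calc _ = vectorSpan ℝ (Prod.fst '' (paraboloidLift '' s)) :=
        (LinearMap.fst ℝ V ℝ).toAffineMap.map_vectorSpan
    _ = vectorSpan ℝ s := by rw [Set.image_image]; simp [paraboloidLift]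

theorem vectorSpan_paraboloidLift_le_graph_iff {s : Set V} {f : V →ₗ[ℝ] ℝ} :
    vectorSpan ℝ (paraboloidLift '' s) ≤ f.graph ↔
      ∀ p ∈ s, ∀ q ∈ s, ‖p‖ ^ 2 - ‖q‖ ^ 2 = f (p - q) := by
  simp [vectorSpan_le_iff, paraboloidLift, LinearMap.mem_graph_iff]

theorem norm_sub_sq_sub_norm_sub_sq (p q c : V) :
    ‖p - c‖ ^ 2 - ‖q - c‖ ^ 2 = ‖p‖ ^ 2 - ‖q‖ ^ 2 - 2 * ⟪c, p - q⟫ := by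
  rw [norm_sub_sq_real, norm_sub_sq_real, inner_sub_right, real_inner_comm c p,
    real_inner_comm c q]
  ring

theorem cospherical_iff_exists_vectorSpan_paraboloidLift_le_graph [FiniteDimensional ℝ V]
    {s : Set V} :
    Cospherical s ↔ ∃ f : V →ₗ[ℝ] ℝ, vectorSpan ℝ (paraboloidLift '' s) ≤ f.graph := by
  simp only [vectorSpan_paraboloidLift_le_graph_iff]
  constructor
  · rintro ⟨c, r, hr⟩
    refine ⟨(2 : ℝ) • innerₛₗ ℝ c, fun p hp q hq => ?_⟩
    have h := norm_sub_sq_sub_norm_sub_sq p q c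
    rw [← dist_eq_norm, ← dist_eq_norm, hr p hp, hr q hq] at h
    simp only [LinearMap.smul_apply, innerₛₗ_apply_apply, smul_eq_mul]
    linarith
  · rintro ⟨f, hf⟩
    rcases s.eq_empty_or_nonempty with rfl | ⟨q, hq⟩
    · exact cospherical_empty
    set c : V := (2⁻¹ : ℝ) • (InnerProductSpace.toDual ℝ V).symm f.toContinuousLinearMap
    have hc : ∀ v, f v = 2 * ⟪c, v⟫ := fun v => by
      simp [c, real_inner_smul_left, InnerProductSpace.toDual_symm_apply]
    refine ⟨c, ‖q - c‖, fun p hp => ?_⟩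
    have h := norm_sub_sq_sub_norm_sub_sq p q c
    rw [hf p hp q hq, hc, sub_self, sub_eq_zero] at h
    rw [dist_eq_norm]
    exact (sq_eq_sq₀ (norm_nonneg _) (norm_nonneg _)).1 h

theorem concyclic_or_collinear_iff_finrank_vectorSpan_paraboloidLift_le_two
    [FiniteDimensional ℝ V] {s : Set V} :
    (Concyclic s ∨ Collinear ℝ s) ↔ finrank ℝ (vectorSpan ℝ (paraboloidLift '' s)) ≤ 2 := by
  set W := vectorSpan ℝ (paraboloidLift '' s)
  have hW : W.map (LinearMap.fst ℝ V ℝ) = vectorSpan ℝ s := map_fst_vectorSpan_paraboloidLift s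
  constructor
  · rintro (⟨hsph, hcop⟩ | hcol)
    · obtain ⟨f, hf⟩ := cospherical_iff_exists_vectorSpan_paraboloidLift_le_graph.1 hsph
      have hvert : ((0 : V), (1 : ℝ)) ∉ W := fun h => by simpa using hf h
      rw [← W.finrank_map_fst_eq_of_notMem hvert, hW]
      exact hcop.finrank_le_two
    · have h := W.finrank_le_finrank_map_fst_add_one
      rw [hW] at h
      linarith [hcol.finrank_le_one]
  · intro h
    by_cases hvert : ((0 : V), (1 : ℝ)) ∈ W
    · right
      have h' := W.finrank_map_fst_add_one_le_of_mem hvert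
      rw [hW] at h'
      rw [collinear_iff_finrank_le_one]
      omega
    · left
      refine ⟨cospherical_iff_exists_vectorSpan_paraboloidLift_le_graph.2
        (exists_le_graph_of_notMem hvert), ?_⟩
      rw [coplanar_iff_finrank_le_two, ← hW, W.finrank_map_fst_eq_of_notMem hvert]
      exact h

end ParaboloidLift

def consCoordsEquiv (n : ℕ) : (EuclideanSpace ℝ (Fin n) × ℝ) ≃ₗ[ℝ] (Fin (n + 1) → ℝ) :=
  (LinearEquiv.prodComm ℝ _ ℝ).trans (((LinearEquiv.refl ℝ ℝ).prodCongr
    (WithLp.linearEquiv 2 ℝ (Fin n → ℝ))).trans (Fin.consLinearEquiv ℝ fun _ => ℝ))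

theorem concyclic_iff_bisector_matrix_rank_le_two_general
    (X : Fin 4 → E)
    (M : Matrix (Fin 3) (Fin 4) ℝ)
    (hM : ∀ (i : Fin 3) (j : Fin 4), M i j =
      Fin.cases (‖X i.castSucc‖ ^ 2 - ‖X i.succ‖ ^ 2)
        (fun k : Fin 3 => (X i.castSucc - X i.succ) k) j) :
    ConcyclicOrCollinear (Set.range X) ↔ M.rank ≤ 2 := by
  have hrows : M.row = consCoordsEquiv 3 ∘
      fun i => paraboloidLift (X i.castSucc) -ᵥ paraboloidLift (X i.succ) := by
    ext i j
    exact hM i j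
  rw [ConcyclicOrCollinear, concyclic_or_collinear_iff_finrank_vectorSpan_paraboloidLift_le_two,
    ← Set.range_comp, vectorSpan_range_eq_span_range_vsub_succ, Matrix.rank_eq_finrank_span_row,
    hrows, Set.range_comp, ← LinearEquiv.coe_coe, ← map_span, LinearEquiv.finrank_map_eq]
  rfl

/-- Four pairwise distinct points lie on a circle or line iff the 3×4
matrix whose `i`-th row is `(‖X i‖² − ‖X (i+1)‖², (X i − X (i+1))ᵀ)` — the coordinate
vectors of the bisector planes of consecutive pairs — has rank at most 2. -/
theorem concyclic_iff_bisector_matrix_rank_le_two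
    (X : Fin 4 → E) (hdist : Function.Injective X)
    (M : Matrix (Fin 3) (Fin 4) ℝ)
    (hM : ∀ (i : Fin 3) (j : Fin 4), M i j =
      Fin.cases (‖X i.castSucc‖ ^ 2 - ‖X i.succ‖ ^ 2)
        (fun k : Fin 3 => (X i.castSucc - X i.succ) k) j) :
    ConcyclicOrCollinear (Set.range X) ↔ M.rank ≤ 2 :=
  concyclic_iff_bisector_matrix_rank_le_two_general X M hM
end
end

section
/- Let X₀, X₁, X₂, X₃ be pairwise distinct coplanar points of E such that the three vectors X₀ − X₁, X₁ − X₂, X₂ − X₃ span a two-dimensional linear subspace, and let λ, μ, ν ∈ ℝ, not all zero, satisfy λ(X₀ − X₁) + μ(X₁ − X₂) + ν(X₂ − X₃) = 0. Then the four points lie on a common circle if and only if λ(‖X₀‖² − ‖X₁‖²) + μ(‖X₁‖² − ‖X₂‖²) + ν(‖X₂‖² − ‖X₃‖²) = 0. -/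
noncomputable section

/-! Centring a sphere at `c / 2`, the points `Xᵢ` lie on it iff `⟪Xᵢ - Xᵢ₊₁, c⟫ = ‖Xᵢ‖² - ‖Xᵢ₊₁‖²`
for the consecutive differences, so concyclicity is the solvability of a linear system
`⟪uᵢ, c⟫ = dᵢ`. Such a system is solvable iff `d` annihilates every linear relation among the `uᵢ`
(the range of the transpose is the annihilator of the kernel). As the three differences span a
plane, their relations form the line through `(λ, μ, ν)`, and the condition becomes
`λ d₀ + μ d₁ + ν d₂ = 0`. -/

open RealInnerProductSpace

theorem Fin.forall_eq_zero_iff_forall_castSucc_eq_succ {α : Type*} {n : ℕ} (f : Fin (n + 1) → α) :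
    (∀ i, f i = f 0) ↔ ∀ i : Fin n, f i.castSucc = f i.succ := by
  refine ⟨fun h i => (h _).trans (h _).symm, fun h i => ?_⟩
  induction i using Fin.induction with
  | zero => rfl
  | succ i ih => exact (h i).symm.trans ih

theorem ker_fintypeLinearCombination_eq_span_singleton {K V ι : Type*} [Field K]
    [AddCommGroup V] [Module K V] [Fintype ι] (v : ι → V) {a : ι → K} (ha : a ≠ 0)
    (hrel : ∑ i, a i • v i = 0)
    (hrank : Module.finrank K (Submodule.span K (Set.range v)) + 1 = Fintype.card ι) :
    LinearMap.ker (Fintype.linearCombination K v) = K ∙ a := by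
  have hle : K ∙ a ≤ LinearMap.ker (Fintype.linearCombination K v) := by
    rw [Submodule.span_singleton_le_iff_mem, LinearMap.mem_ker,
      Fintype.linearCombination_apply, hrel]
  refine (Submodule.eq_of_le_of_finrank_eq hle ?_).symm
  have := LinearMap.finrank_range_add_finrank_ker (Fintype.linearCombination K v)
  rw [Fintype.range_linearCombination, Module.finrank_fintype_fun_eq_card] at this
  rw [finrank_span_singleton ha]
  omega

theorem EuclideanGeometry.concyclic_iff_cospherical {V P : Type*} [NormedAddCommGroup V]
    [InnerProductSpace ℝ V] [MetricSpace P] [NormedAddTorsor V P] {ps : Set P}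
    (h : Coplanar ℝ ps) : Concyclic ps ↔ Cospherical ps :=
  ⟨Concyclic.Cospherical, fun hs => ⟨hs, h⟩⟩

section
variable {F : Type*} [NormedAddCommGroup F] [InnerProductSpace ℝ F]

theorem dist_eq_dist_iff_two_mul_inner_sub (p q c : F) :
    dist p c = dist q c ↔ 2 * ⟪p - q, c⟫ = ‖p‖ ^ 2 - ‖q‖ ^ 2 := by
  rw [dist_eq_norm, dist_eq_norm, ← sq_eq_sq₀ (norm_nonneg _) (norm_nonneg _),
    norm_sub_sq_real, norm_sub_sq_real, inner_sub_left]
  constructor <;> intro h <;> linarith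

theorem cospherical_range_iff_exists_inner {n : ℕ} (X : Fin (n + 1) → F) :
    EuclideanGeometry.Cospherical (Set.range X) ↔
      ∃ c : F, ∀ i : Fin n, ⟪X i.castSucc - X i.succ, c⟫ = ‖X i.castSucc‖ ^ 2 - ‖X i.succ‖ ^ 2 := by
  have hcenter (c : F) : (∀ i : Fin n, dist (X i.castSucc) c = dist (X i.succ) c) ↔
      ∀ i : Fin n, ⟪X i.castSucc - X i.succ, (2 : ℝ) • c⟫ = ‖X i.castSucc‖ ^ 2 - ‖X i.succ‖ ^ 2 := by
    simp only [dist_eq_dist_iff_two_mul_inner_sub, real_inner_smul_right]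
  simp only [EuclideanGeometry.cospherical_def, Set.forall_mem_range]
  constructor
  · rintro ⟨c, r, hr⟩
    exact ⟨(2 : ℝ) • c, (hcenter c).1 fun i => (hr _).trans (hr _).symm⟩
  · rintro ⟨c, hc⟩
    refine ⟨(1 / 2 : ℝ) • c, dist (X 0) ((1 / 2 : ℝ) • c), ?_⟩
    rw [Fin.forall_eq_zero_iff_forall_castSucc_eq_succ (fun i => dist (X i) _), hcenter]
    simpa [smul_smul] using hc

variable [FiniteDimensional ℝ F] {ι : Type*} [Fintype ι]

theorem exists_inner_eq_iff_forall_mem_ker (v : ι → F) (d : ι → ℝ) :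
    (∃ c : F, ∀ i, ⟪v i, c⟫ = d i) ↔
      ∀ a ∈ LinearMap.ker (Fintype.linearCombination ℝ v), ∑ i, a i * d i = 0 := by
  classical
  let φ : Module.Dual ℝ (ι → ℝ) := Fintype.linearCombination ℝ d
  have hφ (a : ι → ℝ) : φ a = ∑ i, a i * d i := by
    simp [φ, Fintype.linearCombination_apply, mul_comm]
  constructor
  · rintro ⟨c, hc⟩ a ha
    rw [LinearMap.mem_ker, Fintype.linearCombination_apply] at ha
    simp_rw [← hc, ← real_inner_smul_left, ← sum_inner, ha, inner_zero_left]
  · intro h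
    have hφ_mem : φ ∈ LinearMap.range (Fintype.linearCombination ℝ v).dualMap := by
      rw [LinearMap.range_dualMap_eq_dualAnnihilator_ker, Submodule.mem_dualAnnihilator]
      exact fun a ha => (hφ a).trans (h a ha)
    obtain ⟨g, hg⟩ := hφ_mem
    refine ⟨(InnerProductSpace.toDual ℝ F).symm (LinearMap.toContinuousLinearMap g), fun i => ?_⟩
    rw [real_inner_comm, InnerProductSpace.toDual_symm_apply]
    simpa [φ, Fintype.linearCombination_apply_single] using LinearMap.congr_fun hg (Pi.single i 1)

theorem exists_inner_eq_iff_of_ker_eq_span_singleton (v : ι → F) (d a : ι → ℝ)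
    (hker : LinearMap.ker (Fintype.linearCombination ℝ v) = ℝ ∙ a) :
    (∃ c : F, ∀ i, ⟪v i, c⟫ = d i) ↔ ∑ i, a i * d i = 0 := by
  simp only [exists_inner_eq_iff_forall_mem_ker, hker, Submodule.mem_span_singleton,
    forall_exists_index, forall_apply_eq_imp_iff, Pi.smul_apply, smul_eq_mul, mul_assoc,
    ← Finset.mul_sum]
  exact ⟨fun h => by simpa using h 1, fun h t => by rw [h, mul_zero]⟩

end

theorem concyclic_iff_circularity_condition_general
    (X : Fin 4 → E)
    (hcop : Coplanar ℝ (Set.range X))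
    (hspan : Module.finrank ℝ
      (Submodule.span ℝ {X 0 - X 1, X 1 - X 2, X 2 - X 3}) = 2)
    (lam mu nu : ℝ) (hnotall : ¬ (lam = 0 ∧ mu = 0 ∧ nu = 0))
    (hrel : lam • (X 0 - X 1) + mu • (X 1 - X 2) + nu • (X 2 - X 3) = 0) :
    EuclideanGeometry.Concyclic (Set.range X) ↔
      lam * (‖X 0‖ ^ 2 - ‖X 1‖ ^ 2) + mu * (‖X 1‖ ^ 2 - ‖X 2‖ ^ 2) +
        nu * (‖X 2‖ ^ 2 - ‖X 3‖ ^ 2) = 0 := by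
  have hrange : Set.range (fun i : Fin 3 => X i.castSucc - X i.succ) =
      {X 0 - X 1, X 1 - X 2, X 2 - X 3} := by
    ext
    simp [Fin.exists_fin_succ, eq_comm]
  have hker : LinearMap.ker (Fintype.linearCombination ℝ fun i : Fin 3 => X i.castSucc - X i.succ)
      = ℝ ∙ ![lam, mu, nu] := by
    refine ker_fintypeLinearCombination_eq_span_singleton _ ?_ ?_ ?_
    · simpa [funext_iff, Fin.forall_fin_succ] using hnotall
    · simpa [Fin.sum_univ_three] using hrel
    · rw [hrange, hspan, Fintype.card_fin]
  rw [EuclideanGeometry.concyclic_iff_cospherical hcop, cospherical_range_iff_exists_inner,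
    exists_inner_eq_iff_of_ker_eq_span_singleton _ _ _ hker]
  simp [Fin.sum_univ_three]

/-- Four pairwise distinct coplanar points whose consecutive difference
vectors span a plane and satisfy a nontrivial linear relation with coefficients
`lam, mu, nu` lie on a common circle iff
`lam (‖X₀‖² − ‖X₁‖²) + mu (‖X₁‖² − ‖X₂‖²) + nu (‖X₂‖² − ‖X₃‖²) = 0`. -/
theorem concyclic_iff_circularity_condition
    (X : Fin 4 → E) (hdist : Function.Injective X)
    (hcop : Coplanar ℝ (Set.range X))
    (hspan : Module.finrank ℝ
      (Submodule.span ℝ {X 0 - X 1, X 1 - X 2, X 2 - X 3}) = 2)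
    (lam mu nu : ℝ) (hnotall : ¬ (lam = 0 ∧ mu = 0 ∧ nu = 0))
    (hrel : lam • (X 0 - X 1) + mu • (X 1 - X 2) + nu • (X 2 - X 3) = 0) :
    EuclideanGeometry.Concyclic (Set.range X) ↔
      lam * (‖X 0‖ ^ 2 - ‖X 1‖ ^ 2) + mu * (‖X 1‖ ^ 2 - ‖X 2‖ ^ 2) +
        nu * (‖X 2‖ ^ 2 - ‖X 3‖ ^ 2) = 0 :=
  concyclic_iff_circularity_condition_general X hcop hspan lam mu nu hnotall hrel
end
end
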